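/- For every n ≥ 1, the number of lattice points in the closed triangle with vertices (0,0), (g_{n+2},0) and (0,g_n), i.e. #{(x,y) ∈ ℤ² : x ≥ 0, y ≥ 0, g_n·x + g_{n+2}·y ≤ g_n·g_{n+2}}, equals (g_n + 1)(g_{n+2} + 1)/2 + 1, which also equals (g_{n+1}² + 3·g_{n+1})/2 + 2. -/

import Mathlib

/-!
Reflecting the rectangle `[0, b] × [0, a]` through its centre swaps the lattice points on or
below the hypotenuse `a x + b y = a b` with those on or above it. For coprime legs the only
lattice points on the hypotenuse are its endpoints, so twice the count is `(a + 1)(b + 1) + 2`.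
For `a = g n`, `b = g (n + 2)` the identities `g n + g (n + 2) = 3 g (n + 1)` and
`g n * g (n + 2) = g (n + 1) ^ 2 + 1` turn `(a + 1)(b + 1)` into `g (n + 1) ^ 2 + 3 g (n + 1) + 2`.
-/

open Finset

/-- The odd-indexed Fibonacci numbers: `g n = fib (2n-1)` for `n ≥ 1`, with `g 0 = 1`. -/
def g : ℕ → ℕ
  | 0 => 1
  | (n+1) => Nat.fib (2*n+1)

namespace LatticeTriangle

noncomputable section

variable (a b : ℤ)

def rect : Finset (ℤ × ℤ) := Icc 0 b ×ˢ Icc 0 a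

def lower : Finset (ℤ × ℤ) := {p ∈ rect a b | a * p.1 + b * p.2 ≤ a * b}

def upper : Finset (ℤ × ℤ) := {p ∈ rect a b | a * b ≤ a * p.1 + b * p.2}

lemma card_upper_eq_card_lower : #(upper a b) = #(lower a b) := by
  let σ : ℤ × ℤ → ℤ × ℤ := fun p => (b - p.1, a - p.2)
  refine card_nbij' σ σ ?_ ?_ (fun p _ => by simp [σ]) (fun p _ => by simp [σ])
  all_goals
    rintro ⟨x, y⟩ hp
    simp only [σ, upper, lower, rect, coe_filter, Set.mem_ofPred_eq, mem_product,
      mem_Icc] at hp ⊢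
    refine ⟨⟨⟨?_, ?_⟩, ?_, ?_⟩, ?_⟩ <;> linarith

lemma lower_union_upper : lower a b ∪ upper a b = rect a b := by
  rw [lower, upper, ← filter_or, filter_true_of_mem fun p _ => le_total _ _]

lemma lower_inter_upper (ha : 0 < a) (hb : 0 < b) (hab : IsCoprime a b) :
    lower a b ∩ upper a b = {(b, 0), (0, a)} := by
  ext ⟨x, y⟩
  simp only [lower, upper, rect, ← filter_and, mem_filter, mem_product, mem_Icc, mem_insert,
    mem_singleton, Prod.mk.injEq]
  constructor
  · rintro ⟨⟨⟨hx0, hxb⟩, hy0, hya⟩, hle, hge⟩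
    have hline : a * x + b * y = a * b := le_antisymm hle hge
    obtain ⟨k, rfl⟩ : a ∣ y := hab.dvd_of_dvd_mul_left ⟨b - x, by linarith⟩
    have hk0 : 0 ≤ k := nonneg_of_mul_nonneg_right hy0 ha
    have hk1 : k ≤ 1 := le_of_mul_le_mul_left (by linarith) ha
    interval_cases k
    · left; constructor <;> nlinarith
    · right; constructor <;> nlinarith
  · rintro (⟨rfl, rfl⟩ | ⟨rfl, rfl⟩) <;> refine ⟨⟨⟨?_, ?_⟩, ?_, ?_⟩, ?_, ?_⟩ <;> linarith

lemma card_rect (ha : 0 ≤ a) (hb : 0 ≤ b) : (#(rect a b) : ℤ) = (a + 1) * (b + 1) := by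
  rw [rect, card_product, Int.card_Icc, Int.card_Icc, Nat.cast_mul,
    Int.toNat_of_nonneg (by omega), Int.toNat_of_nonneg (by omega)]
  ring

lemma two_mul_card_lower (ha : 0 < a) (hb : 0 < b) (hab : IsCoprime a b) :
    2 * (#(lower a b) : ℤ) = (a + 1) * (b + 1) + 2 := by
  have hsplit := card_union_add_card_inter (lower a b) (upper a b)
  rw [lower_union_upper, lower_inter_upper a b ha hb hab, card_upper_eq_card_lower,
    card_pair (by simp [hb.ne'])] at hsplit
  rw [← card_rect a b ha.le hb.le]
  omega

lemma ncard_setOf_eq_card_lower (ha : 0 < a) (hb : 0 < b) :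
    {xy : ℤ × ℤ | 0 ≤ xy.1 ∧ 0 ≤ xy.2 ∧ a * xy.1 + b * xy.2 ≤ a * b}.ncard =
      #(lower a b) := by
  rw [← Set.ncard_coe_finset]
  congr 1
  ext ⟨x, y⟩
  simp only [lower, rect, coe_filter, mem_product, mem_Icc, Set.mem_ofPred_eq]
  constructor
  · rintro ⟨hx, hy, hle⟩
    exact ⟨⟨⟨hx, by nlinarith⟩, hy, by nlinarith⟩, hle⟩
  · rintro ⟨⟨⟨hx, -⟩, hy, -⟩, hle⟩
    exact ⟨hx, hy, hle⟩

end

end LatticeTriangle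

lemma two_mul_ncard_triangle {a b : ℕ} (ha : 0 < a) (hb : 0 < b) (hab : Nat.Coprime a b) :
    2 * {xy : ℤ × ℤ | 0 ≤ xy.1 ∧ 0 ≤ xy.2 ∧
        (a : ℤ) * xy.1 + (b : ℤ) * xy.2 ≤ (a : ℤ) * (b : ℤ)}.ncard = (a + 1) * (b + 1) + 2 := by
  have ha' : (0 : ℤ) < a := by exact_mod_cast ha
  have hb' : (0 : ℤ) < b := by exact_mod_cast hb
  have h := LatticeTriangle.two_mul_card_lower a b ha' hb' (Nat.isCoprime_iff_coprime.2 hab)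
  rw [← LatticeTriangle.ncard_setOf_eq_card_lower _ _ ha' hb'] at h
  exact_mod_cast h

lemma g_pos (n : ℕ) : 0 < g n := by
  cases n with
  | zero => exact Nat.one_pos
  | succ k => exact Nat.fib_pos.2 (by omega)

lemma g_add_two_add_g (n : ℕ) : g (n + 2) + g n = 3 * g (n + 1) := by
  cases n with
  | zero => rfl
  | succ k =>
    simp only [g, show 2 * (k + 2) + 1 = 2 * k + 5 by ring,
      show 2 * (k + 1) + 1 = 2 * k + 3 by ring]
    have h3 : Nat.fib (2 * k + 3) = Nat.fib (2 * k + 1) + Nat.fib (2 * k + 2) := Nat.fib_add_two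
    have h4 : Nat.fib (2 * k + 4) = Nat.fib (2 * k + 2) + Nat.fib (2 * k + 3) := Nat.fib_add_two
    have h5 : Nat.fib (2 * k + 5) = Nat.fib (2 * k + 3) + Nat.fib (2 * k + 4) := Nat.fib_add_two
    omega

-- `g n * g (n + 2) - g (n + 1) ^ 2` is invariant under `g (n + 2) = 3 g (n + 1) - g n`.
lemma g_mul_g_add_two (n : ℕ) : g n * g (n + 2) = g (n + 1) ^ 2 + 1 := by
  zify
  induction n with
  | zero => rfl
  | succ k ih =>
    have hk : (g (k + 2) : ℤ) + g k = 3 * g (k + 1) := by exact_mod_cast g_add_two_add_g k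
    have hk1 : (g (k + 1 + 2) : ℤ) + g (k + 1) = 3 * g (k + 2) := by
      exact_mod_cast g_add_two_add_g (k + 1)
    linear_combination ih + g (k + 1) * hk1 - g (k + 2) * hk

lemma coprime_g_g_add_two (n : ℕ) : Nat.Coprime (g n) (g (n + 2)) := by
  cases n with
  | zero => exact Nat.coprime_one_left _
  | succ k =>
    have hidx : Nat.Coprime (2 * k + 1) (2 * (k + 2) + 1) := by
      rw [show 2 * (k + 2) + 1 = 2 ^ 2 + (2 * k + 1) by ring, Nat.coprime_add_self_right]
      exact .pow_right 2 (Nat.coprime_two_right.2 (odd_two_mul_add_one k))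
    rw [g, g, Nat.Coprime, ← Nat.fib_gcd, hidx, Nat.fib_one]

theorem fib_triangle_lattice_count_general (n : ℕ) :
    Set.ncard {xy : ℤ × ℤ | 0 ≤ xy.1 ∧ 0 ≤ xy.2 ∧
        (g n : ℤ) * xy.1 + (g (n+2) : ℤ) * xy.2 ≤ (g n : ℤ) * (g (n+2) : ℤ)}
      = (g n + 1) * (g (n+2) + 1) / 2 + 1 ∧
    (g n + 1) * (g (n+2) + 1) / 2 + 1 = ((g (n+1))^2 + 3 * g (n+1)) / 2 + 2 := by
  have hcount := two_mul_ncard_triangle (g_pos n) (g_pos (n + 2)) (coprime_g_g_add_two n)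
  have hprod : (g n + 1) * (g (n+2) + 1) = g (n+1) ^ 2 + 3 * g (n+1) + 2 := by
    linear_combination g_mul_g_add_two n + g_add_two_add_g n
  omega

/-- for every `n ≥ 1`, the number of lattice points in the closed triangle with
vertices `(0,0)`, `(g_{n+2},0)`, `(0,g_n)` equals `(g_n+1)(g_{n+2}+1)/2 + 1`, which also
equals `(g_{n+1}² + 3·g_{n+1})/2 + 2` (the divisions are exact). -/
theorem fib_triangle_lattice_count (n : ℕ) (hn : 1 ≤ n) :
    Set.ncard {xy : ℤ × ℤ | 0 ≤ xy.1 ∧ 0 ≤ xy.2 ∧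
        (g n : ℤ) * xy.1 + (g (n+2) : ℤ) * xy.2 ≤ (g n : ℤ) * (g (n+2) : ℤ)}
      = (g n + 1) * (g (n+2) + 1) / 2 + 1 ∧
    (g n + 1) * (g (n+2) + 1) / 2 + 1 = ((g (n+1))^2 + 3 * g (n+1)) / 2 + 2 :=
  fib_triangle_lattice_count_general n
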